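/- For all σ ∈ [0,1] and all real γ with γ² ≥ 6, the polynomial expression 2(3 - 2σ)σ⁴ + 4γ²σ²(2σ - 9) + 6γ⁴(1 + 2σ) is strictly positive. -/

import Mathlib

/-! With `x = γ²`, the expression equals
`6x(x - 6)(1 + 2σ) + 36x(1 + σ(2 - σ)) + 8xσ³ + 2σ⁴(3 - 2σ)`,
a sum of nonnegative terms for `x ≥ 6` and `σ ∈ [0, 1]`, the second of which is at least `36x > 0`. -/

lemma quintic_pos_of_six_le {s x : ℝ} (hs₀ : 0 ≤ s) (hs₁ : s ≤ 1) (hx : 6 ≤ x) :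
    0 < 2 * (3 - 2 * s) * s ^ 4 + 4 * x * s ^ 2 * (2 * s - 9) + 6 * x ^ 2 * (1 + 2 * s) := by
  have hx₀ : 0 < x := by linarith
  have h₁ : 0 ≤ 6 * x * (x - 6) * (1 + 2 * s) :=
    mul_nonneg (mul_nonneg (by positivity) (by linarith)) (by linarith)
  have h₂ : 0 < 36 * x * (1 + s * (2 - s)) :=
    mul_pos (by positivity) (by nlinarith [mul_nonneg hs₀ (by linarith : (0 : ℝ) ≤ 2 - s)])
  have h₃ : 0 ≤ 8 * x * s ^ 3 := by positivity
  have h₄ : 0 ≤ 2 * s ^ 4 * (3 - 2 * s) := mul_nonneg (by positivity) (by linarith)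
  linarith [show 2 * (3 - 2 * s) * s ^ 4 + 4 * x * s ^ 2 * (2 * s - 9) + 6 * x ^ 2 * (1 + 2 * s)
      = 6 * x * (x - 6) * (1 + 2 * s) + 36 * x * (1 + s * (2 - s)) + 8 * x * s ^ 3
        + 2 * s ^ 4 * (3 - 2 * s) by ring]

theorem positivity_lemma_n_eq_two (σ γ : ℝ) (hσ : σ ∈ Set.Icc (0 : ℝ) 1)
    (hγ : 6 ≤ γ ^ 2) :
    0 < 2 * (3 - 2 * σ) * σ ^ 4 + 4 * γ ^ 2 * σ ^ 2 * (2 * σ - 9)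
        + 6 * γ ^ 4 * (1 + 2 * σ) := by
  have := quintic_pos_of_six_le hσ.1 hσ.2 hγ
  rwa [← pow_mul] at this
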